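/- Let P and Q be finite posets with |P| = |Q| = d. Then the Ehrhart polynomials of Γ(O(P), −C(Q)) and Γ(C(P), −C(Q)) coincide: for every positive integer n, |n·Γ(O(P), −C(Q)) ∩ ℤ^d| = |n·Γ(C(P), −C(Q)) ∩ ℤ^d|. -/

import Mathlib

open Set MeasureTheory Pointwise

def IsIdeal {d : ℕ} (P : PartialOrder (Fin d)) (I : Finset (Fin d)) : Prop :=
  ∀ i ∈ I, ∀ j, P.le j i → j ∈ I

def IsAC {d : ℕ} (P : PartialOrder (Fin d)) (A : Finset (Fin d)) : Prop :=
  ∀ i ∈ A, ∀ j ∈ A, i ≠ j → ¬ P.le i j ∧ ¬ P.le j i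

def rho {d : ℕ} (S : Finset (Fin d)) : Fin d → ℝ := fun i => if i ∈ S then 1 else 0

def IsLatticePt {d : ℕ} (x : Fin d → ℝ) : Prop := ∀ i, ∃ z : ℤ, x i = (z : ℝ)

def orderPolytope {d : ℕ} (P : PartialOrder (Fin d)) : Set (Fin d → ℝ) :=
  {x | (∀ i, 0 ≤ x i ∧ x i ≤ 1) ∧ ∀ i j : Fin d, P.le i j → x j ≤ x i}

def chainPolytope {d : ℕ} (P : PartialOrder (Fin d)) : Set (Fin d → ℝ) :=
  {x | (∀ i, 0 ≤ x i) ∧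
    ∀ c : Finset (Fin d), (∀ i ∈ c, ∀ j ∈ c, P.le i j ∨ P.le j i) →
      ∑ i ∈ c, x i ≤ 1}

def idealVerts {d : ℕ} (P : PartialOrder (Fin d)) : Set (Fin d → ℝ) :=
  {x | ∃ I : Finset (Fin d), IsIdeal P I ∧ x = rho I}

def acVerts {d : ℕ} (P : PartialOrder (Fin d)) : Set (Fin d → ℝ) :=
  {x | ∃ A : Finset (Fin d), IsAC P A ∧ x = rho A}

def GammaOO {d : ℕ} (P Q : PartialOrder (Fin d)) : Set (Fin d → ℝ) :=
  convexHull ℝ (idealVerts P ∪ (fun v => -v) '' idealVerts Q)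

def GammaOC {d : ℕ} (P Q : PartialOrder (Fin d)) : Set (Fin d → ℝ) :=
  convexHull ℝ (idealVerts P ∪ (fun v => -v) '' acVerts Q)

def GammaCC {d : ℕ} (P Q : PartialOrder (Fin d)) : Set (Fin d → ℝ) :=
  convexHull ℝ (acVerts P ∪ (fun v => -v) '' acVerts Q)

def IsLinExt {d : ℕ} (P : PartialOrder (Fin d)) (σ : Equiv.Perm (Fin d)) : Prop :=
  ∀ a b : Fin d, P.lt (σ a) (σ b) → a < b

noncomputable def latCount {d : ℕ} (S : Set (Fin d → ℝ)) : ℕ :=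
  Set.ncard {x ∈ S | IsLatticePt x}

def dil {d : ℕ} (n : ℕ) (S : Set (Fin d → ℝ)) : Set (Fin d → ℝ) := (n : ℝ) • S

def UnimodEquiv {d : ℕ} (S T : Set (Fin d → ℝ)) : Prop :=
  ∃ U : Matrix (Fin d) (Fin d) ℤ, IsUnit U.det ∧
    T = (fun v => (U.map (fun z : ℤ => (z : ℝ))).mulVec v) '' S

def IsLatticePolytope {d : ℕ} (S : Set (Fin d → ℝ)) : Prop :=
  ∃ V : Finset (Fin d → ℝ), (∀ v ∈ V, IsLatticePt v) ∧ S = convexHull ℝ ↑V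

def IsFanoPolytope {d : ℕ} (S : Set (Fin d → ℝ)) : Prop :=
  IsLatticePolytope S ∧ affineSpan ℝ S = ⊤ ∧ (0 : Fin d → ℝ) ∈ interior S ∧
    ∀ x ∈ interior S, IsLatticePt x → x = 0

def IsFacet {d : ℕ} (S F : Set (Fin d → ℝ)) : Prop :=
  IsExposed ℝ S F ∧ F.Nonempty ∧ F ≠ S ∧
    ∀ G : Set (Fin d → ℝ), IsExposed ℝ S G → G ≠ S → F ⊆ G → G = F

def IsZBasisSet {d : ℕ} (B : Set (Fin d → ℝ)) : Prop :=
  B.ncard = d ∧ (∀ x ∈ B, IsLatticePt x) ∧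
    ∀ y : Fin d → ℝ, y ∈ Submodule.span ℤ B ↔ IsLatticePt y

def IsSmoothFano {d : ℕ} (S : Set (Fin d → ℝ)) : Prop :=
  IsFanoPolytope S ∧ ∀ F, IsFacet S F → IsZBasisSet (Set.extremePoints ℝ F)

def IsSimplicialPolytope {d : ℕ} (S : Set (Fin d → ℝ)) : Prop :=
  ∀ F : Set (Fin d → ℝ), IsExposed ℝ S F → F ≠ S →
    ∃ V : Set (Fin d → ℝ), V.Finite ∧
      AffineIndependent ℝ ((↑) : V → (Fin d → ℝ)) ∧ F = convexHull ℝ V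

def seg {d : ℕ} (σ : Equiv.Perm (Fin d)) (k : Fin d) : Finset (Fin d) :=
  (Finset.Iic k).image σ

def unitVec (d : ℕ) (a : ℕ) : Fin d → ℝ := fun i => if (i : ℕ) = a then 1 else 0

def pairVec (d : ℕ) (a : ℕ) : Fin d → ℝ :=
  fun i => if (i : ℕ) = a ∨ (i : ℕ) = a + 1 then 1 else 0

def modelSplit (d k l m : ℕ) : Set (Fin d → ℝ) :=
  convexHull ℝ (
    {x | ∃ i : Fin d, x = unitVec d (i : ℕ) ∨ x = -unitVec d (i : ℕ)} ∪
    {x | ∃ i < k, x = pairVec d (2 * i) ∨ x = -pairVec d (2 * i)} ∪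
    {x | ∃ i < l, x = pairVec d (2 * k + 2 * i)} ∪
    {x | ∃ i < m, x = -pairVec d (2 * k + 2 * l + 2 * i)})

def chainOrd (d : ℕ) : PartialOrder (Fin d) := inferInstance

def vOrd (d : ℕ) : PartialOrder (Fin d) where
  le i j := i = j ∨ ((i : ℕ) < (j : ℕ) ∧ 2 ≤ (j : ℕ))
  lt i j := (i = j ∨ ((i : ℕ) < (j : ℕ) ∧ 2 ≤ (j : ℕ))) ∧
    ¬ (j = i ∨ ((j : ℕ) < (i : ℕ) ∧ 2 ≤ (i : ℕ)))
  lt_iff_le_not_ge i j := Iff.rfl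
  le_refl i := Or.inl rfl
  le_trans i j k hij hjk := by
    rcases hij with rfl | ⟨h1, h2⟩
    · exact hjk
    · rcases hjk with rfl | ⟨h3, h4⟩
      · exact Or.inr ⟨h1, h2⟩
      · exact Or.inr ⟨lt_trans h1 h3, h4⟩
  le_antisymm i j hij hji := by
    rcases hij with rfl | ⟨h1, h2⟩
    · rfl
    · rcases hji with h | ⟨h3, h4⟩
      · exact h.symm
      · exact absurd h3 (by omega)

/-!
Both polytopes are joins: `Γ(O(P), -C(Q)) = conv (O(P) ∪ -C(Q))`, so `x` lies in its `n`-th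
dilate iff `x = a - b` with `a ∈ s • O(P)`, `b ∈ t • C(Q)`, `s + t = n`, and the best choice of
`a` is the least nonnegative `P`-antitone majorant `p` of `x`. Stanley's transfer map, extended
piecewise linearly to all of `ℝ^d` by `T(x)_i = x_i - max (0, max_{j > i} x_j)`, satisfies
`T(x)⁻ = p - x` while `T(x)⁺` is the transfer of `p`, which lies in `s • C(P)` iff `p ∈ s • O(P)`.
Hence `T` maps `n • Γ(O(P), -C(Q))` bijectively onto `n • Γ(C(P), -C(Q))`; both `T` and its
inverse (maximal sums along chains) preserve `ℤ^d`.

The vertex descriptions `conv (ideals) = O(P)` and `conv (antichains) = C(P)` follow by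
repeatedly peeling off a multiple of an indicator vector (of the support, resp. of its maximal
elements) that kills one coordinate.
-/

section Chains

variable {ι : Type*} {P : PartialOrder ι}

lemma isChain_coe_iff {c : Finset ι} :
    IsChain P.le (c : Set ι) ↔ ∀ i ∈ c, ∀ j ∈ c, P.le i j ∨ P.le j i :=
  ⟨fun h i hi j hj => (eq_or_ne i j).elim (fun hij => Or.inl (hij ▸ P.le_refl i)) (h hi hj),
    fun h i hi j hj _ => h i hi j hj⟩

lemma exists_forall_le_of_isChain {c : Finset ι} (hc : IsChain P.le (c : Set ι))
    (hne : c.Nonempty) : ∃ m ∈ c, ∀ j ∈ c, P.le m j := by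
  let _ : PartialOrder ι := P
  obtain ⟨m, hm⟩ := c.exists_minimal hne
  refine ⟨m, hm.1, fun j hj => ?_⟩
  rcases eq_or_ne m j with rfl | hmj
  · exact le_rfl
  · exact (hc hm.1 hj hmj).resolve_right fun hjm => hmj (le_antisymm (hm.2 hj hjm) hjm)

lemma exists_forall_ge_of_isChain {c : Finset ι} (hc : IsChain P.le (c : Set ι))
    (hne : c.Nonempty) : ∃ m ∈ c, ∀ j ∈ c, P.le j m := by
  let _ : PartialOrder ι := P
  obtain ⟨m, hm⟩ := c.exists_maximal hne
  refine ⟨m, hm.1, fun j hj => ?_⟩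
  rcases eq_or_ne m j with rfl | hmj
  · exact le_rfl
  · exact (hc hm.1 hj hmj).resolve_left fun hmj' => hmj (le_antisymm hmj' (hm.2 hj hmj'))

lemma exists_maximal_ge_of_isChain {S c : Finset ι} (hS : S.Nonempty) (hcS : c ⊆ S)
    (hc : IsChain P.le (c : Set ι)) : ∃ a ∈ S, (∀ j ∈ S, ¬ P.lt a j) ∧ ∀ j ∈ c, P.le j a := by
  let _ : PartialOrder ι := P
  rcases c.eq_empty_or_nonempty with rfl | hne
  · obtain ⟨a, ha⟩ := S.exists_maximal hS
    exact ⟨a, ha.1, fun j hj => ha.not_gt hj, by simp⟩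
  · obtain ⟨m, hm, hmax⟩ := exists_forall_ge_of_isChain hc hne
    obtain ⟨a, hma, ha⟩ := S.exists_le_maximal (hcS hm)
    exact ⟨a, ha.1, fun j hj => ha.not_gt hj, fun j hj => (hmax j hj).trans hma⟩

variable [Fintype ι]

variable (P) in
open Classical in
noncomputable def chainsFrom (i : ι) : Finset (Finset ι) :=
  Finset.univ.filter fun c => IsChain P.le (c : Set ι) ∧ i ∈ c ∧ ∀ j ∈ c, P.le i j

lemma mem_chainsFrom {i : ι} {c : Finset ι} :
    c ∈ chainsFrom P i ↔ IsChain P.le (c : Set ι) ∧ i ∈ c ∧ ∀ j ∈ c, P.le i j := by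
  simp [chainsFrom]

lemma singleton_mem_chainsFrom (i : ι) : {i} ∈ chainsFrom P i :=
  mem_chainsFrom.2 ⟨by simp, Finset.mem_singleton_self i, by simp⟩

lemma exists_mem_chainsFrom {c : Finset ι} (hc : IsChain P.le (c : Set ι)) (hne : c.Nonempty) :
    ∃ m, c ∈ chainsFrom P m := by
  obtain ⟨m, hm, hmin⟩ := exists_forall_le_of_isChain hc hne
  exact ⟨m, mem_chainsFrom.2 ⟨hc, hm, hmin⟩⟩

lemma notMem_of_mem_chainsFrom {i k : ι} {c : Finset ι} (hik : P.lt i k)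
    (hc : c ∈ chainsFrom P k) : i ∉ c := by
  let _ : PartialOrder ι := P
  exact fun hi => (mem_chainsFrom.1 hc).2.2 i hi |>.not_gt hik

lemma insert_mem_chainsFrom [DecidableEq ι] {i k : ι} {c : Finset ι} (hik : P.lt i k)
    (hc : c ∈ chainsFrom P k) : insert i c ∈ chainsFrom P i := by
  let _ : PartialOrder ι := P
  obtain ⟨hch, -, hk⟩ := mem_chainsFrom.1 hc
  have hle : ∀ j ∈ insert i c, i ≤ j := by
    simpa using fun j hj => hik.le.trans (hk j hj)
  refine mem_chainsFrom.2 ⟨?_, Finset.mem_insert_self i c, hle⟩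
  rw [Finset.coe_insert]
  exact hch.insert fun j hj _ => Or.inl (hle j (Finset.mem_insert_of_mem hj))

lemma sum_erase_le_of_forall_lt [DecidableEq ι] {f : ι → ℝ} {b : ℝ} {i : ι} {c : Finset ι}
    (hb : 0 ≤ b) (hf : ∀ m, P.lt i m → ∀ c ∈ chainsFrom P m, ∑ j ∈ c, f j ≤ b)
    (hc : c ∈ chainsFrom P i) :
    ∑ j ∈ c.erase i, f j ≤ b := by
  let _ : PartialOrder ι := P
  obtain ⟨hch, -, hi⟩ := mem_chainsFrom.1 hc
  rcases (c.erase i).eq_empty_or_nonempty with he | hne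
  · simpa [he] using hb
  obtain ⟨m, hm⟩ := exists_mem_chainsFrom (hch.mono (Finset.coe_subset.2 (c.erase_subset i))) hne
  obtain ⟨hmi, hmc⟩ := Finset.mem_erase.1 (mem_chainsFrom.1 hm).2.1
  exact hf m ((hi m hmc).lt_of_ne' hmi) _ hm

end Chains

section Transfer

variable {ι : Type*} [Fintype ι] (P : PartialOrder ι)

open Classical in
noncomputable def maxAbove (x : ι → ℝ) (i : ι) : ℝ :=
  (Finset.univ.filter (P.lt i ·)).fold max 0 x

/-- The least nonnegative `P`-antitone function above `x`. -/
noncomputable def maxFrom (x : ι → ℝ) (i : ι) : ℝ :=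
  max (x i) (maxAbove P x i)

/-- Stanley's transfer map, extended to all of `ℝ^ι`. -/
noncomputable def transfer (x : ι → ℝ) : ι → ℝ :=
  x - maxAbove P x

variable {P} {x y : ι → ℝ} {i j : ι}

lemma le_maxAbove (h : P.lt i j) : x j ≤ maxAbove P x i :=
  (Finset.le_fold_max _).2 (Or.inr ⟨j, by simpa using h, le_rfl⟩)

lemma maxAbove_nonneg : 0 ≤ maxAbove P x i :=
  (Finset.le_fold_max _).2 (Or.inl le_rfl)

lemma maxAbove_le {b : ℝ} (hb : 0 ≤ b) (h : ∀ j, P.lt i j → x j ≤ b) : maxAbove P x i ≤ b :=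
  (Finset.fold_max_le _).2 ⟨hb, fun j hj => h j (by simpa using hj)⟩

lemma maxAbove_eq_zero_or_exists :
    maxAbove P x i = 0 ∨ ∃ j, P.lt i j ∧ maxAbove P x i = x j := by
  rcases (Finset.le_fold_max _).1 (le_refl (maxAbove P x i)) with h | ⟨j, hj, h⟩
  · exact Or.inl (h.antisymm maxAbove_nonneg)
  · have hij : P.lt i j := by simpa using hj
    exact Or.inr ⟨j, hij, h.antisymm (le_maxAbove hij)⟩

lemma maxAbove_congr (h : ∀ j, P.lt i j → x j = y j) : maxAbove P x i = maxAbove P y i :=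
  Finset.fold_congr fun j hj => h j (by simpa using hj)

lemma le_maxFrom : x i ≤ maxFrom P x i := le_max_left _ _

lemma maxFrom_nonneg : 0 ≤ maxFrom P x i := maxAbove_nonneg.trans (le_max_right _ _)

lemma maxFrom_le_maxAbove (h : P.lt i j) : maxFrom P x j ≤ maxAbove P x i := by
  let _ : PartialOrder ι := P
  exact max_le (le_maxAbove h)
    (maxAbove_le maxAbove_nonneg fun k hk => le_maxAbove (h.trans hk))

lemma maxFrom_antitone (h : P.le i j) : maxFrom P x j ≤ maxFrom P x i := by
  let _ : PartialOrder ι := P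
  rcases h.eq_or_lt with rfl | h
  · exact le_rfl
  · exact (maxFrom_le_maxAbove h).trans (le_max_right _ _)

lemma maxFrom_le {a : ι → ℝ} (ha0 : 0 ≤ a) (hxa : x ≤ a) (ha : ∀ i j, P.le i j → a j ≤ a i) :
    maxFrom P x ≤ a := by
  let _ : PartialOrder ι := P
  exact fun i => max_le (hxa i) (maxAbove_le (ha0 i) fun j hij => (hxa j).trans (ha i j hij.le))

lemma negPart_transfer : (transfer P x)⁻ = maxFrom P x - x := by
  funext i
  simp only [negPart_def, transfer, maxFrom, Pi.sup_apply, Pi.neg_apply, Pi.sub_apply,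
    Pi.zero_apply]
  rw [← max_sub_sub_right, sub_self, neg_sub, max_comm]

lemma posPart_transfer_add_maxAbove :
    (transfer P x)⁺ i + maxAbove P x i = maxFrom P x i := by
  simp only [posPart_def, transfer, maxFrom, Pi.sup_apply, Pi.sub_apply, Pi.zero_apply]
  rw [← max_add_add_right, sub_add_cancel, zero_add]

end Transfer

section TransferBijection

variable {ι : Type*} [Fintype ι] {P : PartialOrder ι} {x y : ι → ℝ} {i : ι}

lemma sum_posPart_transfer_le_maxFrom [DecidableEq ι] (i : ι) :
    ∀ c ∈ chainsFrom P i, ∑ j ∈ c, (transfer P x)⁺ j ≤ maxFrom P x i := by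
  let _ : PartialOrder ι := P
  induction i using WellFoundedGT.induction with
  | _ i ih =>
  intro c hc
  have hrest : ∑ j ∈ c.erase i, (transfer P x)⁺ j ≤ maxAbove P x i :=
    sum_erase_le_of_forall_lt maxAbove_nonneg
      (fun m hm c hc => (ih m hm c hc).trans (maxFrom_le_maxAbove hm)) hc
  rw [← Finset.add_sum_erase c _ (mem_chainsFrom.1 hc).2.1, ← posPart_transfer_add_maxAbove]
  gcongr

lemma exists_mem_chainsFrom_le_sum_transfer [DecidableEq ι] (i : ι) :
    ∃ c ∈ chainsFrom P i, x i ≤ ∑ j ∈ c, transfer P x j := by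
  let _ : PartialOrder ι := P
  induction i using WellFoundedGT.induction with
  | _ i ih =>
  rcases maxAbove_eq_zero_or_exists (P := P) (x := x) (i := i) with h0 | ⟨k, hik, hk⟩
  · exact ⟨{i}, singleton_mem_chainsFrom i, by simp [transfer, h0]⟩
  · obtain ⟨c, hc, hxc⟩ := ih k hik
    refine ⟨insert i c, insert_mem_chainsFrom hik hc, ?_⟩
    rw [Finset.sum_insert (notMem_of_mem_chainsFrom hik hc)]
    have hTi : transfer P x i = x i - x k := by simp [transfer, hk]
    linarith

lemma forall_isChain_sum_posPart_transfer_le_iff {s : ℝ} :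
    (∀ c : Finset ι, IsChain P.le (c : Set ι) → ∑ j ∈ c, (transfer P x)⁺ j ≤ s) ↔
      0 ≤ s ∧ ∀ i, maxFrom P x i ≤ s := by
  classical
  constructor
  · intro h
    have hs : 0 ≤ s := by simpa using h ∅ (by simp)
    have hx : ∀ j, x j ≤ s := fun j => by
      obtain ⟨c, hc, hxc⟩ := exists_mem_chainsFrom_le_sum_transfer (P := P) (x := x) j
      exact hxc.trans ((Finset.sum_le_sum fun k _ => le_posPart (transfer P x) k).trans
        (h c (mem_chainsFrom.1 hc).1))
    exact ⟨hs, fun i => max_le (hx i) (maxAbove_le hs fun j _ => hx j)⟩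
  · rintro ⟨hs, hp⟩ c hc
    rcases c.eq_empty_or_nonempty with rfl | hne
    · simpa using hs
    obtain ⟨m, hm⟩ := exists_mem_chainsFrom hc hne
    exact (sum_posPart_transfer_le_maxFrom m c hm).trans (hp m)

variable (P) in
lemma transfer_injective : Function.Injective (transfer P) := by
  let _ : PartialOrder ι := P
  intro x y h
  funext i
  induction i using WellFoundedGT.induction with
  | _ i ih =>
  have hi := congrFun h i
  have hmax : maxAbove P x i = maxAbove P y i := maxAbove_congr ih
  simp only [transfer, Pi.sub_apply] at hi
  linarith

variable (P) in
lemma chainsFrom_nonempty (i : ι) : (chainsFrom P i).Nonempty :=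
  ⟨_, singleton_mem_chainsFrom i⟩

variable (P) in
noncomputable def transferInv (y : ι → ℝ) (i : ι) : ℝ :=
  (chainsFrom P i).sup' (chainsFrom_nonempty P i) fun c => ∑ j ∈ c, y j

lemma sum_le_transferInv {c : Finset ι} (hc : c ∈ chainsFrom P i) :
    ∑ j ∈ c, y j ≤ transferInv P y i :=
  Finset.le_sup' (fun c => ∑ j ∈ c, y j) hc

lemma exists_mem_chainsFrom_transferInv_eq :
    ∃ c ∈ chainsFrom P i, transferInv P y i = ∑ j ∈ c, y j :=
  Finset.exists_mem_eq_sup' _ _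

lemma maxAbove_transferInv [DecidableEq ι] :
    maxAbove P (transferInv P y) i = transferInv P y i - y i := by
  apply le_antisymm
  · have hyi : y i ≤ transferInv P y i := by
      simpa using sum_le_transferInv (y := y) (singleton_mem_chainsFrom (P := P) i)
    refine maxAbove_le (sub_nonneg.2 hyi) fun k hik => Finset.sup'_le _ _ fun c hc => ?_
    have hsum := sum_le_transferInv (y := y) (insert_mem_chainsFrom hik hc)
    rw [Finset.sum_insert (notMem_of_mem_chainsFrom hik hc)] at hsum
    linarith
  · obtain ⟨c, hc, hXc⟩ := exists_mem_chainsFrom_transferInv_eq (P := P) (y := y) (i := i)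
    rw [hXc, ← Finset.add_sum_erase c y (mem_chainsFrom.1 hc).2.1, add_sub_cancel_left]
    exact sum_erase_le_of_forall_lt maxAbove_nonneg
      (fun m hm c hc => (sum_le_transferInv hc).trans (le_maxAbove hm)) hc

variable (P) in
lemma transfer_transferInv (y : ι → ℝ) : transfer P (transferInv P y) = y := by
  classical
  funext i
  simp [transfer, maxAbove_transferInv]

end TransferBijection

lemma smul_inv_smul_of_le {ι : Type*} {s : ℝ} {z : ι → ℝ} (h0 : 0 ≤ z) (hs : ∀ i, z i ≤ s) :
    s • s⁻¹ • z = z := by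
  rcases eq_or_ne s 0 with rfl | hs0
  · funext i
    simpa using ((hs i).antisymm (h0 i)).symm
  · exact smul_inv_smul₀ hs0 z

section Polytopes

variable {d : ℕ} {P : PartialOrder (Fin d)}

lemma mem_chainPolytope_iff {y : Fin d → ℝ} :
    y ∈ chainPolytope P ↔
      0 ≤ y ∧ ∀ c : Finset (Fin d), IsChain P.le (c : Set (Fin d)) → ∑ i ∈ c, y i ≤ 1 := by
  simp only [chainPolytope, Set.mem_ofPred_eq, isChain_coe_iff, Pi.le_def, Pi.zero_apply]

lemma mem_smul_orderPolytope_iff {s : ℝ} (hs : 0 ≤ s) {z : Fin d → ℝ} :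
    z ∈ s • orderPolytope P ↔ (∀ i, 0 ≤ z i ∧ z i ≤ s) ∧ ∀ i j, P.le i j → z j ≤ z i := by
  constructor
  · rintro ⟨a, ⟨ha, hmono⟩, rfl⟩
    exact ⟨fun i => ⟨mul_nonneg hs (ha i).1, mul_le_of_le_one_right hs (ha i).2⟩,
      fun i j h => mul_le_mul_of_nonneg_left (hmono i j h) hs⟩
  · rintro ⟨hz, hmono⟩
    refine ⟨s⁻¹ • z, ⟨fun i => ⟨mul_nonneg (inv_nonneg.2 hs) (hz i).1,
      inv_mul_le_one_of_le₀ (hz i).2 hs⟩, fun i j h => mul_le_mul_of_nonneg_left (hmono i j h)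
      (inv_nonneg.2 hs)⟩, smul_inv_smul_of_le (fun i => (hz i).1) fun i => (hz i).2⟩

lemma mem_smul_chainPolytope_iff {s : ℝ} (hs : 0 ≤ s) {z : Fin d → ℝ} :
    z ∈ s • chainPolytope P ↔
      0 ≤ z ∧ ∀ c : Finset (Fin d), IsChain P.le (c : Set (Fin d)) → ∑ i ∈ c, z i ≤ s := by
  constructor
  · rintro ⟨b, hb, rfl⟩
    obtain ⟨hb0, hsum⟩ := mem_chainPolytope_iff.1 hb
    refine ⟨fun i => mul_nonneg hs (hb0 i), fun c hc => ?_⟩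
    simpa [Finset.mul_sum] using mul_le_of_le_one_right hs (hsum c hc)
  · rintro ⟨hz, hsum⟩
    have hle : ∀ i, z i ≤ s := fun i => by simpa using hsum {i} (by simp)
    refine ⟨s⁻¹ • z, mem_chainPolytope_iff.2 ⟨fun i => mul_nonneg (inv_nonneg.2 hs) (hz i),
      fun c hc => ?_⟩, smul_inv_smul_of_le hz hle⟩
    simpa [← Finset.mul_sum] using inv_mul_le_one_of_le₀ (hsum c hc) hs

lemma mem_smul_chainPolytope_of_le {s : ℝ} (hs : 0 ≤ s) {z b : Fin d → ℝ}
    (hb : b ∈ s • chainPolytope P) (hz : 0 ≤ z) (hzb : z ≤ b) : z ∈ s • chainPolytope P := by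
  rw [mem_smul_chainPolytope_iff hs] at hb ⊢
  exact ⟨hz, fun c hc => (Finset.sum_le_sum fun i _ => hzb i).trans (hb.2 c hc)⟩

lemma maxFrom_mem_smul_orderPolytope {s : ℝ} (hs : 0 ≤ s) {x a : Fin d → ℝ}
    (ha : a ∈ s • orderPolytope P) (hxa : x ≤ a) : maxFrom P x ∈ s • orderPolytope P := by
  rw [mem_smul_orderPolytope_iff hs] at ha ⊢
  have hle := maxFrom_le (fun i => (ha.1 i).1) hxa ha.2
  exact ⟨fun i => ⟨maxFrom_nonneg, (hle i).trans (ha.1 i).2⟩, fun i j h => maxFrom_antitone h⟩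

/-- Stanley's transfer map carries `s • O(P)` onto `s • C(P)`. -/
lemma posPart_transfer_mem_smul_chainPolytope_iff {s : ℝ} (hs : 0 ≤ s) {x : Fin d → ℝ} :
    (transfer P x)⁺ ∈ s • chainPolytope P ↔ maxFrom P x ∈ s • orderPolytope P := by
  rw [mem_smul_chainPolytope_iff hs, mem_smul_orderPolytope_iff hs,
    forall_isChain_sum_posPart_transfer_le_iff]
  exact ⟨fun h => ⟨fun i => ⟨maxFrom_nonneg, h.2.2 i⟩, fun i j hij => maxFrom_antitone hij⟩,
    fun h => ⟨posPart_nonneg _, hs, fun i => (h.1 i).2⟩⟩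

end Polytopes

section Vertices

variable {d : ℕ} {P : PartialOrder (Fin d)}

lemma rho_empty : rho (∅ : Finset (Fin d)) = 0 := by
  funext i
  simp [rho]

lemma rho_nonneg (S : Finset (Fin d)) (i : Fin d) : 0 ≤ rho S i := by
  unfold rho
  split_ifs <;> norm_num

lemma rho_empty_mem_idealVerts (P : PartialOrder (Fin d)) : rho ∅ ∈ idealVerts P :=
  ⟨∅, by simp [IsIdeal], rfl⟩

lemma rho_empty_mem_acVerts (P : PartialOrder (Fin d)) : rho ∅ ∈ acVerts P :=
  ⟨∅, by simp [IsAC], rfl⟩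

lemma sub_smul_rho_apply (y : Fin d → ℝ) (θ : ℝ) (S : Finset (Fin d)) (j : Fin d) :
    (y - θ • rho S) j = if j ∈ S then y j - θ else y j := by
  by_cases hj : j ∈ S <;> simp [rho, hj]

lemma subset_convexHull_of_peel {K V : Set (Fin d → ℝ)} (hV : rho ∅ ∈ V)
    (hpeel : ∀ y ∈ K, y ≠ 0 → ∃ S, rho S ∈ V ∧ ∃ i ∈ S, (∀ j ∈ S, y j ≠ 0) ∧ 0 ≤ y i ∧
      y i ≤ 1 ∧ y - y i • rho S ∈ (1 - y i) • K) :
    K ⊆ convexHull ℝ V := by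
  intro y hy
  induction hn : (Finset.univ.filter fun j => y j ≠ 0).card using Nat.strong_induction_on
    generalizing y with
  | _ n ih =>
  by_cases hy0 : y = 0
  · rw [hy0, ← rho_empty]
    exact subset_convexHull ℝ V hV
  obtain ⟨S, hS, i, hi, hSy, hyi0, hyi1, y', hy', hyy'⟩ := hpeel y hy hy0
  replace hyy' : (1 - y i) • y' = y - y i • rho S := hyy'
  have hcoord : ∀ j, (1 - y i) * y' j = if j ∈ S then y j - y i else y j := fun j => by
    rw [← sub_smul_rho_apply, ← hyy']
    rfl
  rcases hyi1.eq_or_lt with hyi1 | hyi1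
  · have hyS : y = rho S := funext fun j => by
      have := hcoord j
      rw [hyi1, sub_self, zero_mul] at this
      by_cases hj : j ∈ S <;> simp only [hj, if_true, if_false, rho] at this ⊢ <;> linarith
    rw [hyS]
    exact subset_convexHull ℝ V hS
  have hy'i : y' i = 0 := by
    have := hcoord i
    rw [if_pos hi, sub_self] at this
    exact (mul_eq_zero.1 this).resolve_left (by linarith)
  have hsub : (Finset.univ.filter fun j => y' j ≠ 0) ⊆ Finset.univ.filter fun j => y j ≠ 0 := by
    intro j
    simp only [Finset.mem_filter, Finset.mem_univ, true_and]
    intro hy'j hyj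
    have := hcoord j
    rw [if_neg fun hj => hSy j hj hyj, hyj] at this
    exact hy'j ((mul_eq_zero.1 this).resolve_left (by linarith))
  have hsupp :=
    (Finset.ssubset_iff_of_subset hsub).2 ⟨i, by simpa using hSy i hi, by simpa using hy'i⟩
  have hcomb : y = y i • rho S + (1 - y i) • y' := by
    rw [hyy', add_sub_cancel]
  rw [hcomb]
  exact convex_convexHull ℝ V (subset_convexHull ℝ V hS)
    (ih _ (hn ▸ Finset.card_lt_card hsupp) hy' rfl) hyi0 (by linarith) (by ring)

end Vertices

section Hulls

variable {d : ℕ} {P : PartialOrder (Fin d)}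

lemma convex_orderPolytope : Convex ℝ (orderPolytope P) := by
  rintro x ⟨hx, hxm⟩ y ⟨hy, hym⟩ a b ha hb hab
  refine ⟨fun i => ⟨?_, ?_⟩, fun i j h => ?_⟩ <;>
    simp only [Pi.add_apply, Pi.smul_apply, smul_eq_mul]
  · nlinarith [(hx i).1, (hy i).1]
  · nlinarith [(hx i).2, (hy i).2]
  · nlinarith [hxm i j h, hym i j h]

lemma convex_chainPolytope : Convex ℝ (chainPolytope P) := by
  intro x hx y hy a b ha hb hab
  obtain ⟨hx0, hx⟩ := mem_chainPolytope_iff.1 hx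
  obtain ⟨hy0, hy⟩ := mem_chainPolytope_iff.1 hy
  refine mem_chainPolytope_iff.2 ⟨add_nonneg (smul_nonneg ha hx0) (smul_nonneg hb hy0),
    fun c hc => ?_⟩
  simp only [Pi.add_apply, Pi.smul_apply, smul_eq_mul, Finset.sum_add_distrib,
    ← Finset.mul_sum]
  nlinarith [hx c hc, hy c hc]

lemma idealVerts_subset_orderPolytope : idealVerts P ⊆ orderPolytope P := by
  rintro _ ⟨I, hI, rfl⟩
  refine ⟨fun i => by by_cases hi : i ∈ I <;> simp [rho, hi], fun i j hij => ?_⟩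
  by_cases hj : j ∈ I
  · simp [rho, hj, hI j hj i hij]
  · by_cases hi : i ∈ I <;> simp [rho, hi, hj]

lemma acVerts_subset_chainPolytope : acVerts P ⊆ chainPolytope P := by
  rintro _ ⟨A, hA, rfl⟩
  refine ⟨rho_nonneg A, fun c hc => ?_⟩
  have hcard : (c.filter (· ∈ A)).card ≤ 1 := Finset.card_le_one.2 fun i hi j hj => by
    simp only [Finset.mem_filter] at hi hj
    by_contra hij
    exact (hc i hi.1 j hj.1).elim (hA i hi.2 j hj.2 hij).1 (hA i hi.2 j hj.2 hij).2
  simp only [rho, Finset.sum_boole]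
  exact_mod_cast hcard

lemma orderPolytope_subset_convexHull_idealVerts :
    orderPolytope P ⊆ convexHull ℝ (idealVerts P) := by
  refine subset_convexHull_of_peel (rho_empty_mem_idealVerts P) fun y ⟨hy, hmono⟩ hy0 => ?_
  set S := Finset.univ.filter fun j => y j ≠ 0
  have hS : ∀ j, j ∈ S ↔ y j ≠ 0 := by simp [S]
  obtain ⟨i, hi, hmin⟩ := S.exists_min_image y <| by
    obtain ⟨j, hj⟩ := Function.ne_iff.1 hy0
    exact ⟨j, (hS j).2 hj⟩
  have hideal : IsIdeal P S := fun k hk j hjk => (hS j).2 fun hj0 =>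
    (hS k).1 hk (le_antisymm (hj0 ▸ hmono j k hjk) (hy k).1)
  refine ⟨S, ⟨S, hideal, rfl⟩, i, hi, fun j hj => (hS j).1 hj, (hy i).1, (hy i).2, ?_⟩
  have hz0 : ∀ j, 0 ≤ (y - y i • rho S) j := fun j => by
    rw [sub_smul_rho_apply]
    split_ifs with hj
    exacts [sub_nonneg.2 (hmin j hj), (hy j).1]
  rw [mem_smul_orderPolytope_iff (sub_nonneg.2 (hy i).2)]
  refine ⟨fun j => ⟨hz0 j, ?_⟩, fun j k hjk => ?_⟩
  · rw [sub_smul_rho_apply]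
    split_ifs with hj
    · linarith [(hy j).2]
    · rw [not_not.1 ((hS j).not.1 hj)]
      linarith [(hy i).2]
  · by_cases hk : k ∈ S
    · rw [sub_smul_rho_apply, sub_smul_rho_apply, if_pos hk, if_pos (hideal k hk j hjk)]
      linarith [hmono j k hjk]
    · rw [sub_smul_rho_apply, if_neg hk, not_not.1 ((hS k).not.1 hk)]
      exact hz0 j

lemma sub_smul_rho_mem_smul_chainPolytope {y : Fin d → ℝ} (hy : y ∈ chainPolytope P)
    {A : Finset (Fin d)} {θ : ℝ} (hθ : 0 ≤ θ) (hθA : ∀ a ∈ A, θ ≤ y a)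
    (hA : ∀ c : Finset (Fin d), IsChain P.le (c : Set (Fin d)) → (∀ j ∈ c, y j ≠ 0) →
      ∃ a ∈ A, IsChain P.le (insert a c : Set (Fin d))) :
    y - θ • rho A ∈ (1 - θ) • chainPolytope P := by
  obtain ⟨hy0, hy⟩ := mem_chainPolytope_iff.1 hy
  have hz0 : 0 ≤ y - θ • rho A := fun j => by
    rw [sub_smul_rho_apply]
    split_ifs with hj
    exacts [sub_nonneg.2 (hθA j hj), hy0 j]
  obtain ⟨a₀, ha₀, -⟩ := hA ∅ (by simp) (by simp)
  have hθ1 : θ ≤ 1 := (hθA a₀ ha₀).trans (by simpa using hy {a₀} (by simp))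
  rw [mem_smul_chainPolytope_iff (sub_nonneg.2 hθ1)]
  refine ⟨hz0, fun c hc => ?_⟩
  set c₀ := c.filter fun j => y j ≠ 0
  obtain ⟨a, ha, hca⟩ := hA c₀ (hc.mono (Finset.coe_subset.2 (Finset.filter_subset _ _)))
    fun j hj => (Finset.mem_filter.1 hj).2
  have hsupp : ∀ j ∈ c, (y - θ • rho A) j ≠ 0 → y j ≠ 0 := fun j _ hzj hyj => hzj <| by
    rw [sub_smul_rho_apply, hyj]
    split_ifs with hjA
    · linarith [hθA j hjA]
    · rfl
  have hrhoa : 1 ≤ ∑ j ∈ insert a c₀, rho A j :=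
    (if_pos ha : rho A a = 1).symm.le.trans
      (Finset.single_le_sum (fun j _ => rho_nonneg A j) (Finset.mem_insert_self a c₀))
  calc ∑ j ∈ c, (y - θ • rho A) j = ∑ j ∈ c₀, (y - θ • rho A) j :=
        (Finset.sum_filter_of_ne hsupp).symm
    _ ≤ ∑ j ∈ insert a c₀, (y - θ • rho A) j :=
        Finset.sum_le_sum_of_subset_of_nonneg (Finset.subset_insert a c₀) fun j _ _ => hz0 j
    _ = ∑ j ∈ insert a c₀, y j - θ * ∑ j ∈ insert a c₀, rho A j := by
        simp [Finset.sum_sub_distrib, Finset.mul_sum]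
    _ ≤ 1 - θ := by nlinarith [hy _ (by rwa [Finset.coe_insert])]

lemma chainPolytope_subset_convexHull_acVerts :
    chainPolytope P ⊆ convexHull ℝ (acVerts P) := by
  classical
  refine subset_convexHull_of_peel (rho_empty_mem_acVerts P) fun y hy hy0 => ?_
  let _ : PartialOrder (Fin d) := P
  obtain ⟨hy0', hsum⟩ := mem_chainPolytope_iff.1 hy
  set S := Finset.univ.filter fun j => y j ≠ 0
  have hS : ∀ j, j ∈ S ↔ y j ≠ 0 := by simp [S]
  set A := S.filter fun a => ∀ j ∈ S, ¬ P.lt a j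
  have hAS : A ⊆ S := Finset.filter_subset _ _
  have hAac : IsAC P A := fun i hi j hj hij => by
    simp only [A, Finset.mem_filter] at hi hj
    exact ⟨fun h => hi.2 j hj.1 (lt_of_le_of_ne h hij),
      fun h => hj.2 i hi.1 (lt_of_le_of_ne h (Ne.symm hij))⟩
  have hdom : ∀ c : Finset (Fin d), IsChain P.le (c : Set (Fin d)) → (∀ j ∈ c, y j ≠ 0) →
      ∃ a ∈ A, IsChain P.le (insert a c : Set (Fin d)) := fun c hc hcy => by
    obtain ⟨j, hj⟩ := Function.ne_iff.1 hy0
    obtain ⟨a, haS, hmax, hca⟩ := exists_maximal_ge_of_isChain ⟨j, (hS j).2 hj⟩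
      (fun k hk => (hS k).2 (hcy k hk)) hc
    exact ⟨a, Finset.mem_filter.2 ⟨haS, hmax⟩, hc.insert fun k hk _ => Or.inr (hca k hk)⟩
  obtain ⟨a₀, ha₀, -⟩ := hdom ∅ (by simp) (by simp)
  obtain ⟨i, hi, hmin⟩ := A.exists_min_image y ⟨a₀, ha₀⟩
  refine ⟨A, ⟨A, hAac, rfl⟩, i, hi, fun j hj => (hS j).1 (hAS hj), hy0' i,
    by simpa using hsum {i} (by simp), sub_smul_rho_mem_smul_chainPolytope hy (hy0' i) hmin hdom⟩

lemma convexHull_idealVerts : convexHull ℝ (idealVerts P) = orderPolytope P :=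
  (convexHull_min idealVerts_subset_orderPolytope convex_orderPolytope).antisymm
    orderPolytope_subset_convexHull_idealVerts

lemma convexHull_acVerts : convexHull ℝ (acVerts P) = chainPolytope P :=
  (convexHull_min acVerts_subset_chainPolytope convex_chainPolytope).antisymm
    chainPolytope_subset_convexHull_acVerts

end Hulls

lemma mem_smul_convexJoin_iff {E : Type*} [AddCommGroup E] [Module ℝ E] {A B : Set E} {r : ℝ}
    (hr : 0 < r) {x : E} :
    x ∈ r • convexJoin ℝ A B ↔
      ∃ s t : ℝ, 0 ≤ s ∧ 0 ≤ t ∧ s + t = r ∧ ∃ a ∈ s • A, ∃ b ∈ t • B, a + b = x := by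
  constructor
  · rintro ⟨z, hz, rfl⟩
    obtain ⟨a, ha, b, hb, u, v, hu, hv, huv, rfl⟩ := mem_convexJoin.1 hz
    refine ⟨r * u, r * v, by positivity, by positivity, by rw [← mul_add, huv, mul_one],
      _, Set.smul_mem_smul_set ha, _, Set.smul_mem_smul_set hb, ?_⟩
    simp only [smul_add, smul_smul]
  · rintro ⟨s, t, hs, ht, hst, _, ⟨a, ha, rfl⟩, _, ⟨b, hb, rfl⟩, rfl⟩
    refine ⟨(s / r) • a + (t / r) • b, mem_convexJoin.2 ⟨a, ha, b, hb, s / r, t / r,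
      by positivity, by positivity, by rw [← add_div, hst, div_self hr.ne'], rfl⟩, ?_⟩
    simp only [smul_add, smul_smul, mul_div_cancel₀ _ hr.ne']

section Gamma

variable {d : ℕ} {P Q : PartialOrder (Fin d)}

lemma GammaOC_eq : GammaOC P Q = convexJoin ℝ (orderPolytope P) (-chainPolytope Q) := by
  rw [GammaOC, Set.image_neg_eq_neg, convexHull_union ⟨_, rho_empty_mem_idealVerts P⟩
    ⟨_, Set.neg_mem_neg.2 (rho_empty_mem_acVerts Q)⟩, convexHull_neg, convexHull_idealVerts,
    convexHull_acVerts]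

lemma GammaCC_eq : GammaCC P Q = convexJoin ℝ (chainPolytope P) (-chainPolytope Q) := by
  rw [GammaCC, Set.image_neg_eq_neg, convexHull_union ⟨_, rho_empty_mem_acVerts P⟩
    ⟨_, Set.neg_mem_neg.2 (rho_empty_mem_acVerts Q)⟩, convexHull_neg, convexHull_acVerts,
    convexHull_acVerts]

lemma mem_dil_GammaOC_iff {n : ℕ} (hn : 0 < n) {x : Fin d → ℝ} :
    x ∈ dil n (GammaOC P Q) ↔ ∃ s t : ℝ, 0 ≤ s ∧ 0 ≤ t ∧ s + t = n ∧
      maxFrom P x ∈ s • orderPolytope P ∧ maxFrom P x - x ∈ t • chainPolytope Q := by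
  rw [dil, GammaOC_eq, mem_smul_convexJoin_iff (Nat.cast_pos.2 hn)]
  constructor
  · rintro ⟨s, t, hs, ht, hst, a, ha, b, hb, rfl⟩
    rw [Set.smul_set_neg, Set.mem_neg] at hb
    have hb0 := ((mem_smul_chainPolytope_iff ht).1 hb).1
    have hxa : a + b ≤ a := add_le_of_nonpos_right (neg_nonneg.1 hb0)
    have hpa := maxFrom_le (fun i => (((mem_smul_orderPolytope_iff hs).1 ha).1 i).1) hxa
      ((mem_smul_orderPolytope_iff hs).1 ha).2
    refine ⟨s, t, hs, ht, hst, maxFrom_mem_smul_orderPolytope hs ha hxa,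
      mem_smul_chainPolytope_of_le ht hb (sub_nonneg.2 fun i => le_maxFrom) ?_⟩
    exact (sub_le_sub_right hpa _).trans_eq (by abel)
  · rintro ⟨s, t, hs, ht, hst, hp, hq⟩
    exact ⟨s, t, hs, ht, hst, _, hp, -(maxFrom P x - x),
      by rwa [Set.smul_set_neg, Set.neg_mem_neg], by abel⟩

lemma mem_dil_GammaCC_iff {n : ℕ} (hn : 0 < n) {y : Fin d → ℝ} :
    y ∈ dil n (GammaCC P Q) ↔ ∃ s t : ℝ, 0 ≤ s ∧ 0 ≤ t ∧ s + t = n ∧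
      y⁺ ∈ s • chainPolytope P ∧ y⁻ ∈ t • chainPolytope Q := by
  rw [dil, GammaCC_eq, mem_smul_convexJoin_iff (Nat.cast_pos.2 hn)]
  constructor
  · rintro ⟨s, t, hs, ht, hst, a, ha, b, hb, rfl⟩
    rw [Set.smul_set_neg, Set.mem_neg] at hb
    have ha0 := ((mem_smul_chainPolytope_iff hs).1 ha).1
    have hb0 := ((mem_smul_chainPolytope_iff ht).1 hb).1
    refine ⟨s, t, hs, ht, hst, mem_smul_chainPolytope_of_le hs ha (posPart_nonneg _) ?_,
      mem_smul_chainPolytope_of_le ht hb (negPart_nonneg _) ?_⟩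
    · exact posPart_def (a + b) ▸ sup_le (add_le_of_nonpos_right (neg_nonneg.1 hb0)) ha0
    · refine negPart_def (a + b) ▸ sup_le ?_ hb0
      rw [neg_add]
      exact add_le_of_nonpos_left (neg_nonpos.2 ha0)
  · rintro ⟨s, t, hs, ht, hst, hp, hq⟩
    exact ⟨s, t, hs, ht, hst, _, hp, -y⁻, by rwa [Set.smul_set_neg, Set.neg_mem_neg],
      by rw [← sub_eq_add_neg, posPart_sub_negPart]⟩

lemma mem_dil_GammaOC_iff_transfer_mem {n : ℕ} (hn : 0 < n) {x : Fin d → ℝ} :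
    x ∈ dil n (GammaOC P Q) ↔ transfer P x ∈ dil n (GammaCC P Q) := by
  rw [mem_dil_GammaOC_iff hn, mem_dil_GammaCC_iff hn, negPart_transfer]
  refine exists₂_congr fun s t => ⟨?_, ?_⟩
  · rintro ⟨hs, ht, hst, hp, hq⟩
    exact ⟨hs, ht, hst, (posPart_transfer_mem_smul_chainPolytope_iff hs).2 hp, hq⟩
  · rintro ⟨hs, ht, hst, hp, hq⟩
    exact ⟨hs, ht, hst, (posPart_transfer_mem_smul_chainPolytope_iff hs).1 hp, hq⟩

end Gamma

section Lattice

variable {d : ℕ} {P : PartialOrder (Fin d)}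

lemma isLatticePt_transfer {x : Fin d → ℝ} (hx : IsLatticePt x) :
    IsLatticePt (transfer P x) := by
  intro i
  obtain ⟨zi, hzi⟩ := hx i
  rcases maxAbove_eq_zero_or_exists (P := P) (x := x) (i := i) with h | ⟨j, -, h⟩
  · exact ⟨zi, by simp [transfer, h, hzi]⟩
  · obtain ⟨zj, hzj⟩ := hx j
    exact ⟨zi - zj, by simp [transfer, h, hzi, hzj]⟩

lemma isLatticePt_transferInv {y : Fin d → ℝ} (hy : IsLatticePt y) :
    IsLatticePt (transferInv P y) := by
  intro i
  obtain ⟨c, -, hc⟩ := exists_mem_chainsFrom_transferInv_eq (P := P) (y := y) (i := i)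
  choose z hz using hy
  exact ⟨∑ j ∈ c, z j, by simp [hc, hz]⟩

end Lattice

theorem statement8 {d : ℕ} (P Q : PartialOrder (Fin d)) :
    ∀ n : ℕ, 0 < n →
      latCount (dil n (GammaOC P Q)) = latCount (dil n (GammaCC P Q)) := by
  intro n hn
  have himage : transfer P '' {x ∈ dil n (GammaOC P Q) | IsLatticePt x} =
      {y ∈ dil n (GammaCC P Q) | IsLatticePt y} := by
    ext y
    constructor
    · rintro ⟨x, ⟨hx, hlx⟩, rfl⟩
      exact ⟨(mem_dil_GammaOC_iff_transfer_mem hn).1 hx, isLatticePt_transfer hlx⟩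
    · rintro ⟨hy, hly⟩
      refine ⟨transferInv P y, ⟨?_, isLatticePt_transferInv hly⟩, transfer_transferInv P y⟩
      rwa [mem_dil_GammaOC_iff_transfer_mem hn, transfer_transferInv]
  rw [latCount, latCount, ← himage, Set.ncard_image_of_injective _ (transfer_injective P)]
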